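/- arXiv:1404.6196 — 3 statements merged into one kernel-verified Lean document; each statement's English description precedes it below -/
import Mathlib

section
/- Permutation insertion lemma: if s ⊐_ℓ b by clause (sb), b = b₀ ++ b₁ with both b₀ and b₁ nonempty, then for any sequence c, [s] ++ c ⊐_ℓ b₀ ++ c ++ b₁ holds by clause (ab). -/
/-- First-order terms over a signature `F` and variables `V` (variadic). -/
inductive Tm (F V : Type) : Type
  | var : V → Tm F V
  | app : F → List (Tm F V) → Tm F V

/-- Proper subterm relation: `PSub s t` means `s` is a proper subterm of `t`. -/
inductive PSub {F V : Type} : Tm F V → Tm F V → Prop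
  | arg {f : F} {ts : List (Tm F V)} {t : Tm F V} : t ∈ ts → PSub t (Tm.app f ts)
  | trans {f : F} {ts : List (Tm F V)} {s t : Tm F V} : t ∈ ts → PSub s t → PSub s (Tm.app f ts)

/-- Terms or sequences of terms. -/
abbrev TS (F V : Type) := Tm F V ⊕ List (Tm F V)

/-- The order `⊐_ℓ` on terms and sequences of terms, given a precedence `prec`. -/
inductive Spl {F V : Type} (prec : F → F → Prop) (ℓ : ℕ) : TS F V → TS F V → Prop
  | st {f g : F} {ss ts : List (Tm F V)} :
      prec f g → (∀ t ∈ ts, PSub t (Tm.app f ss)) → ts.length ≤ ℓ →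
      Spl prec ℓ (Sum.inl (Tm.app f ss)) (Sum.inl (Tm.app g ts))
  | sb {f : F} {ss ts : List (Tm F V)} :
      (∀ t ∈ ts, Spl prec ℓ (Sum.inl (Tm.app f ss)) (Sum.inl t)) → ts.length ≤ ℓ →
      Spl prec ℓ (Sum.inl (Tm.app f ss)) (Sum.inr ts)
  | ab {ss ts : List (Tm F V)} (bs : List (List (Tm F V)))
      (i : ℕ) (s : Tm F V) (b : List (Tm F V)) :
      bs.length = ss.length →
      bs.flatten.Perm ts →
      (∀ (j : ℕ) s' b', ss[j]? = some s' → bs[j]? = some b' →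
        b' ≠ [s'] → Spl prec ℓ (Sum.inl s') (Sum.inr b')) →
      ss[i]? = some s → bs[i]? = some b →
      Spl prec ℓ (Sum.inl s) (Sum.inr b) →
      Spl prec ℓ (Sum.inr ss) (Sum.inr ts)

/- Each element `x` of `c` gets the singleton block `[x]`, which clause (ab) exempts from
its side condition. -/
theorem Spl.cons_of_inl_inr {F V : Type} {prec : F → F → Prop} {ℓ : ℕ} {s : Tm F V}
    {b : List (Tm F V)} (hsb : Spl prec ℓ (Sum.inl s) (Sum.inr b)) (c : List (Tm F V)) :
    Spl prec ℓ (Sum.inr (s :: c)) (Sum.inr (b ++ c)) := by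
  refine Spl.ab (b :: c.map fun x => [x]) 0 s b (by simp) ?_ ?_ rfl rfl hsb
  · rw [List.flatten_cons, ← List.flatMap_def, List.flatMap_singleton']
  · rintro (_ | j) s' b' hs hb hne
    · simp only [List.getElem?_cons_zero, Option.some.injEq] at hs hb
      exact hs ▸ hb ▸ hsb
    · rw [List.getElem?_cons_succ] at hs
      simp only [List.getElem?_cons_succ, List.getElem?_map, hs, Option.map_some,
        Option.some.injEq] at hb
      exact absurd hb.symm hne

theorem Spl.inr_perm_right {F V : Type} {prec : F → F → Prop} {ℓ : ℕ} {ss ts ts' : List (Tm F V)}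
    (h : Spl prec ℓ (Sum.inr ss) (Sum.inr ts)) (hp : ts.Perm ts') :
    Spl prec ℓ (Sum.inr ss) (Sum.inr ts') := by
  cases h with
  | ab bs i s b hlen hperm hblocks hs hb hsb =>
    exact .ab bs i s b hlen (hperm.trans hp) hblocks hs hb hsb

theorem spl_perm_insert_general {F V : Type} (prec : F → F → Prop) (ℓ : ℕ)
    (f : F) (ss b₀ b₁ : List (Tm F V))
    (hsb : ∀ t ∈ b₀ ++ b₁, Spl prec ℓ (Sum.inl (Tm.app f ss)) (Sum.inl t))
    (hlen : (b₀ ++ b₁).length ≤ ℓ) :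
    ∀ c : List (Tm F V),
      Spl prec ℓ (Sum.inr ([Tm.app f ss] ++ c)) (Sum.inr (b₀ ++ c ++ b₁)) := by
  intro c
  have hperm : (b₀ ++ b₁ ++ c).Perm (b₀ ++ c ++ b₁) := by
    simpa only [List.append_assoc] using List.perm_append_comm.append_left b₀
  exact ((Spl.sb hsb hlen).cons_of_inl_inr c).inr_perm_right hperm

/-- permutation insertion lemma. If `s ⊐_ℓ b₀ ++ b₁` by clause (sb)
with both `b₀` and `b₁` nonempty, then `[s] ++ c ⊐_ℓ b₀ ++ c ++ b₁` (by clause (ab)). -/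
theorem spl_perm_insert {F V : Type} (prec : F → F → Prop) (ℓ : ℕ)
    (f : F) (ss b₀ b₁ : List (Tm F V))
    (hsb : ∀ t ∈ b₀ ++ b₁, Spl prec ℓ (Sum.inl (Tm.app f ss)) (Sum.inl t))
    (hlen : (b₀ ++ b₁).length ≤ ℓ)
    (h₀ : b₀ ≠ []) (h₁ : b₁ ≠ []) :
    ∀ c : List (Tm F V),
      Spl prec ℓ (Sum.inr ([Tm.app f ss] ++ c)) (Sum.inr (b₀ ++ c ++ b₁)) :=
  spl_perm_insert_general prec ℓ f ss b₀ b₁ hsb hlen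
end

section
/- The relation ⊐_ℓ is well-founded for every fixed ℓ ≥ 1; consequently the maximal reduction length G_ℓ(a) = max{ k ∈ ℕ ∣ ∃ a₁,…,a_k with a ⊐_ℓ a₁ ⊐_ℓ ⋯ ⊐_ℓ a_k } is well-defined (finite) for every term or sequence a. -/
/-- `ChainLen R a n`: there is an `R`-descending chain of length `n` starting at `a`. -/
def ChainLen {α : Type*} (R : α → α → Prop) (a : α) (n : ℕ) : Prop :=
  ∃ f : ℕ → α, f 0 = a ∧ ∀ i < n, R (f i) (f (i + 1))

open Relation

theorem ChainLen.le_of_lt {α : Type*} {R : α → α → Prop} (m : α → ℕ)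
    (hm : ∀ ⦃a b⦄, R a b → m b < m a) {a : α} {n : ℕ} (h : ChainLen R a n) : n ≤ m a := by
  obtain ⟨f, rfl, hf⟩ := h
  have key : ∀ i ≤ n, m (f i) + i ≤ m (f 0) := by
    intro i hi
    induction i with
    | zero => simp
    | succ i ih => have := hm (hf i hi); have := ih (by omega); omega
  have := key n le_rfl
  omega

theorem List.sum_map_lt_sum_map_of_getElem? {α β M : Type*} [AddMonoid M] [Preorder M]
    [AddLeftStrictMono M] [AddLeftMono M] [AddRightStrictMono M] [AddRightMono M]
    {f : α → M} {g : β → M} {l₁ : List α} {l₂ : List β} (hlen : l₂.length = l₁.length)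
    (hle : ∀ (j : ℕ) a b, l₁[j]? = some a → l₂[j]? = some b → g b ≤ f a)
    {i : ℕ} {a : α} {b : β} (ha : l₁[i]? = some a) (hb : l₂[i]? = some b) (hlt : g b < f a) :
    (l₂.map g).sum < (l₁.map f).sum := by
  have hzip : ∀ {p : α × β}, p ∈ l₁.zip l₂ ↔ ∃ j : ℕ, l₁[j]? = some p.1 ∧ l₂[j]? = some p.2 := by
    intro p
    simp [List.mem_iff_getElem?, List.getElem?_zip_eq_some]
  have h₁ : (l₁.zip l₂).map Prod.fst = l₁ := List.map_fst_zip hlen.ge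
  have h₂ : (l₁.zip l₂).map Prod.snd = l₂ := List.map_snd_zip hlen.le
  conv_lhs => rw [← h₂, List.map_map]
  conv_rhs => rw [← h₁, List.map_map]
  refine List.sum_lt_sum (g ∘ Prod.snd) (f ∘ Prod.fst) (fun p hp => ?_)
    ⟨(a, b), hzip.2 ⟨i, ha, hb⟩, hlt⟩
  obtain ⟨j, hj₁, hj₂⟩ := hzip.1 hp
  exact hle j _ _ hj₁ hj₂

theorem card_transGen_lt_of_rel {α : Type*} [Finite α] {r : α → α → Prop}
    (hr : WellFounded r) {a b : α} (h : r a b) :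
    {c | TransGen r b c}.ncard < {c | TransGen r a c}.ncard := by
  refine Set.ncard_lt_ncard ?_ (Set.toFinite _)
  refine (Set.ssubset_iff_of_subset fun c hc => TransGen.head h hc).2 ⟨b, .single h, fun hbb => ?_⟩
  exact hr.transGen.asymmetric _ _ hbb hbb

noncomputable def symbolRank {F : Type} (prec : F → F → Prop) (f : F) : ℕ :=
  {g | TransGen prec f g}.ncard

noncomputable def Tm.weight {F V : Type} (prec : F → F → Prop) (base : ℕ) : Tm F V → ℕ
  | .var _ => 0
  | .app f _ => base ^ symbolRank prec f

noncomputable def TS.weight {F V : Type} (prec : F → F → Prop) (base : ℕ) : TS F V → ℕ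
  | .inl t => t.weight prec base
  | .inr ts => (ts.map (Tm.weight prec base)).sum

namespace Spl

variable {F V : Type} [Finite F] {prec : F → F → Prop} {ℓ base : ℕ}

theorem mul_weight_le_of_inl (hprec : WellFounded prec) (hbase : 0 < base)
    {s t : Tm F V} (h : Spl prec ℓ (.inl s) (.inl t)) :
    base * t.weight prec base ≤ s.weight prec base := by
  cases h with
  | st hfg _ _ =>
    rw [Tm.weight, Tm.weight, ← pow_succ']
    exact Nat.pow_le_pow_right hbase (card_transGen_lt_of_rel hprec hfg)

theorem weight_lt (hprec : WellFounded prec) (hbase : 1 < base) (hℓ : ℓ < base)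
    {a b : TS F V} (h : Spl prec ℓ a b) : b.weight prec base < a.weight prec base := by
  induction h with
  | st hfg _ _ =>
    exact Nat.pow_lt_pow_right hbase (card_transGen_lt_of_rel hprec hfg)
  | @sb f ss ts hts hlen _ =>
    set top := base ^ symbolRank prec f
    have hsum : base * (ts.map (Tm.weight prec base)).sum ≤ ts.length * top := by
      rw [← List.sum_map_mul_left, ← smul_eq_mul, ← List.length_map (f := fun t => base * _)]
      refine List.sum_le_card_nsmul _ _ fun w hw => ?_
      obtain ⟨t, ht, rfl⟩ := List.mem_map.1 hw
      exact mul_weight_le_of_inl hprec (by omega) (hts t ht)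
    have : ts.length * top < base * top :=
      Nat.mul_lt_mul_of_pos_right (by omega) (Nat.pow_pos (by omega))
    exact Nat.lt_of_mul_lt_mul_left (hsum.trans_lt this)
  | @ab ss ts bs i s b hlen hperm _ hsi hbi _ ih ihi =>
    have hts : (ts.map (Tm.weight prec base)).sum
        = (bs.map fun b' => (b'.map (Tm.weight prec base)).sum).sum := by
      rw [← (hperm.map _).sum_eq, List.map_flatten, List.sum_flatten, List.map_map]
      rfl
    rw [TS.weight, TS.weight, hts]
    refine List.sum_map_lt_sum_map_of_getElem? hlen (fun j s' b' hs' hb' => ?_) hsi hbi ihi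
    by_cases hsingle : b' = [s']
    · simp [hsingle]
    · exact (ih j s' b' hs' hb' hsingle).le

end Spl

theorem spl_wellFounded_and_finite_chains_general {F V : Type} [Finite F]
    (prec : F → F → Prop) (hprec : WellFounded prec) (ℓ : ℕ) :
    WellFounded (fun a b : TS F V => Spl prec ℓ b a) ∧
    ∀ a : TS F V, ∃ N : ℕ, ∀ n, ChainLen (Spl prec ℓ) a n → n ≤ N := by
  have hdec : ∀ ⦃a b : TS F V⦄, Spl prec ℓ a b →
      b.weight prec (ℓ + 2) < a.weight prec (ℓ + 2) :=
    fun _ _ h => h.weight_lt hprec (by omega) (by omega)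
  exact ⟨Subrelation.wf (fun h => hdec h) (measure (TS.weight prec (ℓ + 2))).wf,
    fun a => ⟨_, fun _ => ChainLen.le_of_lt _ hdec⟩⟩

/-- `⊐_ℓ` is well-founded for every fixed `ℓ ≥ 1`; consequently the
maximal reduction length from any term or sequence is well-defined (finite). -/
theorem spl_wellFounded_and_finite_chains {F V : Type} [Finite F] [Finite V]
    (prec : F → F → Prop) (hprec : WellFounded prec) (ℓ : ℕ) (hℓ : 1 ≤ ℓ) :
    WellFounded (fun a b : TS F V => Spl prec ℓ b a) ∧
    ∀ a : TS F V, ∃ N : ℕ, ∀ n, ChainLen (Spl prec ℓ) a n → n ≤ N :=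
  spl_wellFounded_and_finite_chains_general prec hprec ℓ
end

section
/- Generalized permutation insertion: if s ⊐_ℓ b by clause (sb), b = b₁ ++ ⋯ ++ b_k with each b_j nonempty, and c = c₁ ++ ⋯ ++ c_k is any sequence split into k (possibly empty) parts, then [s] ++ c ⊐_ℓ b₁ ++ c₁ ++ b₂ ++ c₂ ++ ⋯ ++ b_k ++ c_k by clause (ab). -/
/-! Match `s` with the block `b = b₁ ++ ⋯ ++ b_k` (so `s ⊐_ℓ b` by (sb)) and each element `t` of `c`
with the singleton block `[t]`, which clause (ab) accepts as the non-strict case `t ⊒_ℓ [t]`.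
The concatenation `b ++ c` of these blocks is a permutation of `b₁ ++ c₁ ++ ⋯ ++ b_k ++ c_k`. -/

theorem List.perm_flatten_zipWith_append {α : Type*} :
    ∀ {bs cs : List (List α)}, bs.length = cs.length →
      (List.zipWith (· ++ ·) bs cs).flatten.Perm (bs.flatten ++ cs.flatten)
  | [], [], _ => .refl _
  | b :: bs, c :: cs, hlen => by
    simp only [List.zipWith_cons_cons, List.flatten_cons, List.append_assoc]
    have ih := perm_flatten_zipWith_append (by simpa using hlen : bs.length = cs.length)
    exact .append_left b <| (ih.append_left c).trans (List.perm_append_comm_assoc _ _ _)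

theorem Spl.cons_of_perm {F V : Type} {prec : F → F → Prop} {ℓ : ℕ} {s : Tm F V}
    {b c ts : List (Tm F V)} (hs : Spl prec ℓ (Sum.inl s) (Sum.inr b)) (hperm : (b ++ c).Perm ts) :
    Spl prec ℓ (Sum.inr (s :: c)) (Sum.inr ts) := by
  have hflat : (c.map fun t => [t]).flatten = c := by
    rw [← List.flatMap_def, List.flatMap_singleton']
  refine .ab (b :: c.map fun t => [t]) 0 s b (by simp) (by simpa [hflat] using hperm) ?_ rfl rfl hs
  rintro (_ | j) s' b' hs' hb' hne
  · simp only [List.getElem?_cons_zero, Option.some.injEq] at hs' hb'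
    exact hs' ▸ hb' ▸ hs
  · simp only [List.getElem?_cons_succ] at hs' hb'
    simp only [List.getElem?_map, hs', Option.map_some, Option.some.injEq] at hb'
    exact absurd hb'.symm hne

theorem spl_perm_insert_gen_general {F V : Type} (prec : F → F → Prop) (ℓ : ℕ)
    (f : F) (ss : List (Tm F V)) (bs cs : List (List (Tm F V)))
    (hlen : bs.length = cs.length)
    (hsb : ∀ t ∈ bs.flatten, Spl prec ℓ (Sum.inl (Tm.app f ss)) (Sum.inl t))
    (hl : bs.flatten.length ≤ ℓ) :
    Spl prec ℓ (Sum.inr ([Tm.app f ss] ++ cs.flatten))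
      (Sum.inr (List.zipWith (· ++ ·) bs cs).flatten) :=
  Spl.cons_of_perm (.sb hsb hl) (List.perm_flatten_zipWith_append hlen).symm

/-- generalized permutation insertion. -/
theorem spl_perm_insert_gen {F V : Type} (prec : F → F → Prop) (ℓ : ℕ)
    (f : F) (ss : List (Tm F V)) (bs cs : List (List (Tm F V)))
    (hlen : bs.length = cs.length) (hne : ∀ b ∈ bs, b ≠ [])
    (hsb : ∀ t ∈ bs.flatten, Spl prec ℓ (Sum.inl (Tm.app f ss)) (Sum.inl t))
    (hl : bs.flatten.length ≤ ℓ) :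
    Spl prec ℓ (Sum.inr ([Tm.app f ss] ++ cs.flatten))
      (Sum.inr (List.zipWith (· ++ ·) bs cs).flatten) :=
  spl_perm_insert_gen_general prec ℓ f ss bs cs hlen hsb hl
end
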